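/- Under assumptions (A2) and (A3), suppose α ≥ 2·N·L̄/(1−γ). Let (x_k, z_k) be a closed-loop trajectory such that there exists an index K with W(x_k) > z_k for all k ≥ K. Then the internal state is eventually constant, z_k = z_K =: z_∞ > 0 for all k ≥ K, the series Σ_{k>K} Q(x_k) converges with Σ_{k=K+2}^∞ Q(x_k) ≤ J*(x_{K+1}, z_∞)/z_∞, and in particular Q(x_k) → 0 as k → ∞. -/
import Mathlib


open Filter Topology

noncomputable section

/-- The state space `ℝⁿ` with the Euclidean norm. -/
abbrev Euc (n : ℕ) := EuclideanSpace ℝ (Fin n)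

/-- Predicted trajectory: `traj f x u ℓ` is the state `x^u_ℓ(x)` reached `ℓ` steps ahead
starting from `x` and applying the controls `u 0, u 1, …` (so `traj f x u 0 = x` and
`x^u_1(x) = f x (u 0)`). -/
def traj {n m : ℕ} (f : Euc n → Euc m → Euc n) (x : Euc n) (u : ℕ → Euc m) : ℕ → Euc n
  | 0 => x
  | ℓ + 1 => f (traj f x u ℓ) (u ℓ)

/-- `Φ(x,u,q) = Σ_{ℓ=1}^q L(x^u_ℓ(x), u_ℓ)`. -/
def Phi {n m : ℕ} (f : Euc n → Euc m → Euc n) (L : Euc n → Euc m → ℝ)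
    (x : Euc n) (u : ℕ → Euc m) (q : ℕ) : ℝ :=
  ∑ i ∈ Finset.range q, L (traj f x u (i + 1)) (u i)

/-- `W̲(x,u,q) = min_{1 ≤ ℓ ≤ q} W(x^u_ℓ(x))`. -/
def Wlow {n m : ℕ} (f : Euc n → Euc m → Euc n) (W : Euc n → ℝ)
    (x : Euc n) (u : ℕ → Euc m) (q : ℕ) : ℝ :=
  sInf ((fun ℓ => W (traj f x u ℓ)) '' Set.Icc 1 q)

/-- The cost `J^{(x,z)}(u,q) = z·Φ(x,u,q) + α·W̲(x,u,q)`. -/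
def Jcost {n m : ℕ} (f : Euc n → Euc m → Euc n) (L : Euc n → Euc m → ℝ) (W : Euc n → ℝ)
    (α : ℝ) (x : Euc n) (z : ℝ) (u : ℕ → Euc m) (q : ℕ) : ℝ :=
  z * Phi f L x u q + α * Wlow f W x u q

/-- A pair `(u, q)` is feasible for `P(x,z)`: controls in `𝕌`, horizon `1 ≤ q ≤ N`, and the
predicted states over the horizon stay in `𝔾`. -/
def Feasible {n m : ℕ} (f : Euc n → Euc m → Euc n) (𝕌 : Set (Euc m)) (𝔾 : Set (Euc n))
    (N : ℕ) (x : Euc n) (u : ℕ → Euc m) (q : ℕ) : Prop :=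
  (∀ i, u i ∈ 𝕌) ∧ 1 ≤ q ∧ q ≤ N ∧ ∀ ℓ ∈ Set.Icc 1 q, traj f x u ℓ ∈ 𝔾

/-- `J*(x,z)`: the infimum of the cost over feasible pairs. -/
def Jstar {n m : ℕ} (f : Euc n → Euc m → Euc n) (𝕌 : Set (Euc m)) (𝔾 : Set (Euc n))
    (N : ℕ) (L : Euc n → Euc m → ℝ) (W : Euc n → ℝ) (α : ℝ) (x : Euc n) (z : ℝ) : ℝ :=
  sInf {c | ∃ u q, Feasible f 𝕌 𝔾 N x u q ∧ c = Jcost f L W α x z u q}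

/-- Assumption (A2): `W` is continuous and positive definite, `γ ∈ (0,1)`, `N ≥ 1`, and from
every admissible state there is an admissible control sequence contracting `W` by `γ`
within `N` steps. -/
def A2 {n m : ℕ} (f : Euc n → Euc m → Euc n) (𝕌 : Set (Euc m)) (𝔾 : Set (Euc n))
    (W : Euc n → ℝ) (γ : ℝ) (N : ℕ) : Prop :=
  Continuous W ∧ W 0 = 0 ∧ (∀ x, x ≠ 0 → 0 < W x) ∧ γ ∈ Set.Ioo (0 : ℝ) 1 ∧ 1 ≤ N ∧
    ∀ x ∈ 𝔾, ∃ u : ℕ → Euc m, (∀ i, u i ∈ 𝕌) ∧ (∀ ℓ ∈ Set.Icc 1 N, traj f x u ℓ ∈ 𝔾) ∧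
      Wlow f W x u N ≤ γ * W x

/-- Assumption (A3): the stage cost `L` satisfies `0 ≤ L ≤ L̄` on `𝔾 × 𝕌`, and
`Q(x) := L(x,0)` is positive definite with `Q(x) ≤ L(x,u)` for all `u`. -/
def A3 {n m : ℕ} (𝕌 : Set (Euc m)) (𝔾 : Set (Euc n)) (L : Euc n → Euc m → ℝ)
    (Lbar : ℝ) : Prop :=
  (∀ x ∈ 𝔾, ∀ u ∈ 𝕌, 0 ≤ L x u ∧ L x u ≤ Lbar) ∧
    L 0 0 = 0 ∧ (∀ x, x ≠ 0 → 0 < L x 0) ∧ (∀ x u, L x 0 ≤ L x u)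

/-- A closed-loop trajectory `(x_k, z_k)` of the MPC law: at each instant an optimal feasible
pair `(u*, q*)` with minimal horizon among optimal pairs is applied (first control only), and
the internal state `z` is updated by `z⁺ = z` if `W(x) > z` and `z⁺ = β z` otherwise. -/
def ClosedLoop {n m : ℕ} (f : Euc n → Euc m → Euc n) (𝕌 : Set (Euc m)) (𝔾 : Set (Euc n))
    (N : ℕ) (L : Euc n → Euc m → ℝ) (W : Euc n → ℝ) (α β : ℝ)
    (x : ℕ → Euc n) (z : ℕ → ℝ) : Prop :=
  (∀ k, ∃ (ustar : ℕ → Euc m) (qstar : ℕ),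
      Feasible f 𝕌 𝔾 N (x k) ustar qstar ∧
      Jcost f L W α (x k) (z k) ustar qstar = Jstar f 𝕌 𝔾 N L W α (x k) (z k) ∧
      (∀ u q, Feasible f 𝕌 𝔾 N (x k) u q →
        Jcost f L W α (x k) (z k) u q = Jstar f 𝕌 𝔾 N L W α (x k) (z k) → qstar ≤ q) ∧
      x (k + 1) = f (x k) (ustar 0)) ∧
  ∀ k, z (k + 1) = if z k < W (x k) then z k else β * z k


/-! ### Auxiliary lemmas -/

lemma traj_succ {n m : ℕ} (f : Euc n → Euc m → Euc n) (x : Euc n) (u : ℕ → Euc m) (ℓ : ℕ) :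
    traj f x u (ℓ + 1) = f (traj f x u ℓ) (u ℓ) := rfl

lemma traj_shift {n m : ℕ} (f : Euc n → Euc m → Euc n) (x : Euc n) (u : ℕ → Euc m) :
    ∀ ℓ, traj f (f x (u 0)) (fun i => u (i + 1)) ℓ = traj f x u (ℓ + 1)
  | 0 => rfl
  | ℓ + 1 => by
      rw [traj_succ, traj_shift f x u ℓ]; rfl

lemma W_nonneg {n m : ℕ} {f : Euc n → Euc m → Euc n} {𝕌 : Set (Euc m)} {𝔾 : Set (Euc n)}
    {W : Euc n → ℝ} {γ : ℝ} {N : ℕ} (hA2 : A2 f 𝕌 𝔾 W γ N) (y : Euc n) : 0 ≤ W y := by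
  rcases eq_or_ne y 0 with h | h
  · simp [h, hA2.2.1]
  · exact (hA2.2.2.1 y h).le

lemma Q_nonneg {n m : ℕ} {𝕌 : Set (Euc m)} {𝔾 : Set (Euc n)} {L : Euc n → Euc m → ℝ}
    {Lbar : ℝ} (hA3 : A3 𝕌 𝔾 L Lbar) (y : Euc n) : 0 ≤ L y 0 := by
  rcases eq_or_ne y 0 with h | h
  · simp [h, hA3.2.1]
  · exact (hA3.2.2.1 y h).le

lemma Lbar_nonneg {n m : ℕ} {𝕌 : Set (Euc m)} {𝔾 : Set (Euc n)} {L : Euc n → Euc m → ℝ}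
    {Lbar : ℝ} (hA3 : A3 𝕌 𝔾 L Lbar) (hU0 : (0 : Euc m) ∈ 𝕌) (hG0 : (0 : Euc n) ∈ 𝔾) :
    0 ≤ Lbar :=
  le_trans (hA3.1 0 hG0 0 hU0).1 (hA3.1 0 hG0 0 hU0).2

lemma Wlow_le {n m : ℕ} (f : Euc n → Euc m → Euc n) (W : Euc n → ℝ) (x : Euc n)
    (u : ℕ → Euc m) {q ℓ : ℕ} (hℓ : ℓ ∈ Set.Icc 1 q) :
    Wlow f W x u q ≤ W (traj f x u ℓ) :=
  csInf_le ((Set.finite_Icc 1 q).image _).bddBelow ⟨ℓ, hℓ, rfl⟩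

lemma le_Wlow {n m : ℕ} (f : Euc n → Euc m → Euc n) (W : Euc n → ℝ) (x : Euc n)
    (u : ℕ → Euc m) {q : ℕ} (hq : 1 ≤ q) {c : ℝ}
    (h : ∀ ℓ ∈ Set.Icc 1 q, c ≤ W (traj f x u ℓ)) : c ≤ Wlow f W x u q := by
  refine le_csInf ⟨_, ⟨1, Set.mem_Icc.2 ⟨le_rfl, hq⟩, rfl⟩⟩ ?_
  rintro b ⟨ℓ, hℓ, rfl⟩
  exact h ℓ hℓ

lemma Wlow_attained {n m : ℕ} (f : Euc n → Euc m → Euc n) (W : Euc n → ℝ) (x : Euc n)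
    (u : ℕ → Euc m) {q : ℕ} (hq : 1 ≤ q) :
    ∃ ℓ ∈ Set.Icc 1 q, Wlow f W x u q = W (traj f x u ℓ) := by
  have h : Wlow f W x u q ∈ (fun ℓ => W (traj f x u ℓ)) '' Set.Icc 1 q :=
    Set.Nonempty.csInf_mem ⟨_, ⟨1, Set.mem_Icc.2 ⟨le_rfl, hq⟩, rfl⟩⟩
      ((Set.finite_Icc 1 q).image _)
  rcases h with ⟨ℓ, hℓ, h⟩
  exact ⟨ℓ, hℓ, h.symm⟩

lemma Wlow_nonneg {n m : ℕ} {f : Euc n → Euc m → Euc n} {𝕌 : Set (Euc m)} {𝔾 : Set (Euc n)}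
    {W : Euc n → ℝ} {γ : ℝ} {N : ℕ} (hA2 : A2 f 𝕌 𝔾 W γ N) (x : Euc n)
    (u : ℕ → Euc m) {q : ℕ} (hq : 1 ≤ q) : 0 ≤ Wlow f W x u q :=
  le_Wlow f W x u hq (fun ℓ _ => W_nonneg hA2 _)

lemma Phi_nonneg {n m : ℕ} {f : Euc n → Euc m → Euc n} {𝕌 : Set (Euc m)} {𝔾 : Set (Euc n)}
    {L : Euc n → Euc m → ℝ} {Lbar : ℝ} (hA3 : A3 𝕌 𝔾 L Lbar) {N : ℕ} {x : Euc n}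
    {u : ℕ → Euc m} {q : ℕ} (hfeas : Feasible f 𝕌 𝔾 N x u q) : 0 ≤ Phi f L x u q := by
  refine Finset.sum_nonneg fun i hi => ?_
  have hi' : i + 1 ∈ Set.Icc 1 q := by
    simp only [Finset.mem_range] at hi
    exact Set.mem_Icc.2 ⟨Nat.le_add_left 1 i, hi⟩
  exact (hA3.1 _ (hfeas.2.2.2 _ hi') _ (hfeas.1 i)).1

lemma Jcost_nonneg {n m : ℕ} {f : Euc n → Euc m → Euc n} {𝕌 : Set (Euc m)} {𝔾 : Set (Euc n)}
    {W : Euc n → ℝ} {L : Euc n → Euc m → ℝ} {γ Lbar α : ℝ} {N : ℕ}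
    (hA2 : A2 f 𝕌 𝔾 W γ N) (hA3 : A3 𝕌 𝔾 L Lbar) (hα : 0 < α)
    {x : Euc n} {z : ℝ} (hz : 0 < z) {u : ℕ → Euc m} {q : ℕ}
    (hfeas : Feasible f 𝕌 𝔾 N x u q) : 0 ≤ Jcost f L W α x z u q :=
  add_nonneg (mul_nonneg hz.le (Phi_nonneg hA3 hfeas))
    (mul_nonneg hα.le (Wlow_nonneg hA2 x u hfeas.2.1))

lemma Jstar_le {n m : ℕ} {f : Euc n → Euc m → Euc n} {𝕌 : Set (Euc m)} {𝔾 : Set (Euc n)}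
    {W : Euc n → ℝ} {L : Euc n → Euc m → ℝ} {γ Lbar α : ℝ} {N : ℕ}
    (hA2 : A2 f 𝕌 𝔾 W γ N) (hA3 : A3 𝕌 𝔾 L Lbar) (hα : 0 < α)
    {x : Euc n} {z : ℝ} (hz : 0 < z) {u : ℕ → Euc m} {q : ℕ}
    (hfeas : Feasible f 𝕌 𝔾 N x u q) :
    Jstar f 𝕌 𝔾 N L W α x z ≤ Jcost f L W α x z u q := by
  refine csInf_le ⟨0, ?_⟩ ⟨u, q, hfeas, rfl⟩
  rintro c ⟨u', q', hf', rfl⟩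
  exact Jcost_nonneg hA2 hA3 hα hz hf'

lemma Jstar_nonneg {n m : ℕ} {f : Euc n → Euc m → Euc n} {𝕌 : Set (Euc m)} {𝔾 : Set (Euc n)}
    {W : Euc n → ℝ} {L : Euc n → Euc m → ℝ} {γ Lbar α : ℝ} {N : ℕ}
    (hA2 : A2 f 𝕌 𝔾 W γ N) (hA3 : A3 𝕌 𝔾 L Lbar) (hα : 0 < α)
    (x : Euc n) {z : ℝ} (hz : 0 < z) : 0 ≤ Jstar f 𝕌 𝔾 N L W α x z := by
  refine Real.sInf_nonneg ?_
  rintro c ⟨u', q', hf', rfl⟩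
  exact Jcost_nonneg hA2 hA3 hα hz hf'

/-- Key decrease lemma. -/
lemma key_decrease {n m : ℕ} {f : Euc n → Euc m → Euc n} {𝕌 : Set (Euc m)} {𝔾 : Set (Euc n)}
    {W : Euc n → ℝ} {L : Euc n → Euc m → ℝ} {γ Lbar α : ℝ} {N : ℕ}
    (hU0 : (0 : Euc m) ∈ 𝕌) (hG0 : (0 : Euc n) ∈ 𝔾)
    (hA2 : A2 f 𝕌 𝔾 W γ N) (hA3 : A3 𝕌 𝔾 L Lbar)
    (hα : 0 < α) (hαbig : 2 * N * Lbar / (1 - γ) ≤ α)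
    (x0 : Euc n) {z : ℝ} (hz : 0 < z)
    (ustar : ℕ → Euc m) (qstar : ℕ)
    (hfeas : Feasible f 𝕌 𝔾 N x0 ustar qstar)
    (hopt : Jcost f L W α x0 z ustar qstar = Jstar f 𝕌 𝔾 N L W α x0 z)
    (hmin : ∀ u q, Feasible f 𝕌 𝔾 N x0 u q →
      Jcost f L W α x0 z u q = Jstar f 𝕌 𝔾 N L W α x0 z → qstar ≤ q)
    (hzW : z < W (f x0 (ustar 0))) :
    Jstar f 𝕌 𝔾 N L W α (f x0 (ustar 0)) z ≤
      Jstar f 𝕌 𝔾 N L W α x0 z - z * L (f x0 (ustar 0)) 0 := by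
  obtain ⟨hU, hq1, hqN, hGtraj⟩ := hfeas
  set x1 : Euc n := f x0 (ustar 0) with hx1
  have htraj1 : traj f x0 ustar 1 = x1 := rfl
  have hx1G : x1 ∈ 𝔾 := by
    have := hGtraj 1 (Set.mem_Icc.2 ⟨le_rfl, hq1⟩)
    rwa [htraj1] at this
  -- Step A: the minimum of W along the optimal trajectory is attained at qstar
  have hA : Wlow f W x0 ustar qstar = W (traj f x0 ustar qstar) := by
    obtain ⟨ℓ0, hℓ0, hmem⟩ := Wlow_attained f W x0 ustar hq1
    rcases eq_or_lt_of_le hℓ0.2 with h | h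
    · rw [hmem, h]
    · -- truncation to ℓ0 is also optimal: contradiction with minimality
      exfalso
      have hfeas0 : Feasible f 𝕌 𝔾 N x0 ustar ℓ0 :=
        ⟨hU, hℓ0.1, le_trans hℓ0.2 hqN, fun ℓ hℓ =>
          hGtraj ℓ (Set.mem_Icc.2 ⟨hℓ.1, le_trans hℓ.2 hℓ0.2⟩)⟩
      have hWeq : Wlow f W x0 ustar ℓ0 = Wlow f W x0 ustar qstar := by
        refine le_antisymm ?_ ?_
        · rw [hmem]
          exact Wlow_le f W x0 ustar (Set.mem_Icc.2 ⟨hℓ0.1, le_rfl⟩)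
        · refine le_Wlow f W x0 ustar hℓ0.1 fun ℓ hℓ => ?_
          exact Wlow_le f W x0 ustar (Set.mem_Icc.2 ⟨hℓ.1, le_trans hℓ.2 hℓ0.2⟩)
      have hPhile : Phi f L x0 ustar ℓ0 ≤ Phi f L x0 ustar qstar := by
        refine Finset.sum_le_sum_of_subset_of_nonneg
          (Finset.range_subset_range.2 hℓ0.2) fun i hi _ => ?_
        have hi' : i + 1 ∈ Set.Icc 1 qstar := by
          simp only [Finset.mem_range] at hi
          exact Set.mem_Icc.2 ⟨Nat.le_add_left 1 i, hi⟩
        exact (hA3.1 _ (hGtraj _ hi') _ (hU i)).1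
      have hle : Jcost f L W α x0 z ustar ℓ0 ≤ Jstar f 𝕌 𝔾 N L W α x0 z := by
        rw [← hopt]
        unfold Jcost
        rw [hWeq]
        have := mul_le_mul_of_nonneg_left hPhile hz.le
        linarith
      have hge : Jstar f 𝕌 𝔾 N L W α x0 z ≤ Jcost f L W α x0 z ustar ℓ0 :=
        Jstar_le hA2 hA3 hα hz hfeas0
      have := hmin ustar ℓ0 hfeas0 (le_antisymm hle hge)
      omega
  rcases eq_or_lt_of_le hq1 with hq1' | hq2
  · -- Case qstar = 1
    have hq1'' : qstar = 1 := hq1'.symm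
    subst hq1''
    have hW1 : Wlow f W x0 ustar 1 = W x1 := by rw [hA, htraj1]
    have hPhi1 : Phi f L x0 ustar 1 = L x1 (ustar 0) := by
      unfold Phi
      rw [Finset.sum_range_one, htraj1]
    have hJ0 : Jstar f 𝕌 𝔾 N L W α x0 z = z * L x1 (ustar 0) + α * W x1 := by
      rw [← hopt]; unfold Jcost; rw [hW1, hPhi1]
    -- use the contraction assumption from x1
    obtain ⟨utld, hutldU, hutldG, hutldW⟩ := hA2.2.2.2.2.2 x1 hx1G
    have hN1 : 1 ≤ N := hA2.2.2.2.2.1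
    have hfeasN : Feasible f 𝕌 𝔾 N x1 utld N := ⟨hutldU, hN1, le_rfl, hutldG⟩
    have hPhiN : Phi f L x1 utld N ≤ N * Lbar := by
      unfold Phi
      calc ∑ i ∈ Finset.range N, L (traj f x1 utld (i + 1)) (utld i)
          ≤ ∑ i ∈ Finset.range N, Lbar := by
            refine Finset.sum_le_sum fun i hi => ?_
            have hi' : i + 1 ∈ Set.Icc 1 N := by
              simp only [Finset.mem_range] at hi
              exact Set.mem_Icc.2 ⟨Nat.le_add_left 1 i, hi⟩
            exact (hA3.1 _ (hutldG _ hi') _ (hutldU i)).2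
        _ = N * Lbar := by rw [Finset.sum_const, Finset.card_range, nsmul_eq_mul]
    have hγ : γ ∈ Set.Ioo (0:ℝ) 1 := hA2.2.2.2.1
    have hαγ : 2 * N * Lbar ≤ α * (1 - γ) := by
      rw [div_le_iff₀ (by linarith [hγ.2])] at hαbig
      linarith
    have hLbar : 0 ≤ Lbar := Lbar_nonneg hA3 hU0 hG0
    have hNL : 0 ≤ (N : ℝ) * Lbar := mul_nonneg (Nat.cast_nonneg N) hLbar
    have hWx1 : 0 < W x1 := hz.trans hzW
    have hkey : z * (N * Lbar) + α * (γ * W x1) ≤ α * W x1 := by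
      nlinarith [hzW.le, hWx1.le, hγ.1.le]
    calc Jstar f 𝕌 𝔾 N L W α x1 z
        ≤ Jcost f L W α x1 z utld N := Jstar_le hA2 hA3 hα hz hfeasN
      _ = z * Phi f L x1 utld N + α * Wlow f W x1 utld N := rfl
      _ ≤ z * (N * Lbar) + α * (γ * W x1) := by
          have h1 := mul_le_mul_of_nonneg_left hPhiN hz.le
          have h2 := mul_le_mul_of_nonneg_left hutldW hα.le
          linarith
      _ ≤ α * W x1 := hkey
      _ ≤ Jstar f 𝕌 𝔾 N L W α x0 z - z * L x1 0 := by
          rw [hJ0]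
          have := mul_le_mul_of_nonneg_left (hA3.2.2.2 x1 (ustar 0)) hz.le
          linarith
  · -- Case qstar ≥ 2: shift the optimal pair
    obtain ⟨q', rfl⟩ : ∃ q', qstar = q' + 1 := ⟨qstar - 1, by omega⟩
    set u' : ℕ → Euc m := fun i => ustar (i + 1) with hu'
    have htshift : ∀ ℓ, traj f x1 u' ℓ = traj f x0 ustar (ℓ + 1) := traj_shift f x0 ustar
    have hfeas' : Feasible f 𝕌 𝔾 N x1 u' q' := by
      refine ⟨fun i => hU (i + 1), by omega, by omega, fun ℓ hℓ => ?_⟩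
      obtain ⟨hℓ1, hℓ2⟩ := hℓ
      rw [htshift]
      exact hGtraj (ℓ + 1) (Set.mem_Icc.2 ⟨by omega, by omega⟩)
    have hPhi' : Phi f L x1 u' q' = Phi f L x0 ustar (q' + 1) - L x1 (ustar 0) := by
      unfold Phi
      rw [Finset.sum_range_succ']
      have : ∀ i, L (traj f x1 u' (i + 1)) (u' i)
          = L (traj f x0 ustar (i + 1 + 1)) (ustar (i + 1)) := by
        intro i; rw [htshift]
      simp only [this, htraj1]
      ring
    have hW' : Wlow f W x1 u' q' = W (traj f x0 ustar (q' + 1)) := by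
      refine le_antisymm ?_ ?_
      · have h : traj f x1 u' q' = traj f x0 ustar (q' + 1) := htshift q'
        rw [← h]
        exact Wlow_le f W x1 u' (Set.mem_Icc.2 ⟨by omega, le_rfl⟩)
      · refine le_Wlow f W x1 u' (by omega) fun ℓ hℓ => ?_
        obtain ⟨hℓ1, hℓ2⟩ := hℓ
        rw [htshift, ← hA]
        exact Wlow_le f W x0 ustar (Set.mem_Icc.2 ⟨by omega, by omega⟩)
    calc Jstar f 𝕌 𝔾 N L W α x1 z
        ≤ Jcost f L W α x1 z u' q' := Jstar_le hA2 hA3 hα hz hfeas'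
      _ = z * (Phi f L x0 ustar (q' + 1) - L x1 (ustar 0))
            + α * W (traj f x0 ustar (q' + 1)) := by rw [Jcost, hPhi', hW']
      _ = Jcost f L W α x0 z ustar (q' + 1) - z * L x1 (ustar 0) := by
          rw [Jcost, hA]; ring
      _ ≤ Jstar f 𝕌 𝔾 N L W α x0 z - z * L x1 0 := by
          rw [hopt]
          have := mul_le_mul_of_nonneg_left (hA3.2.2.2 x1 (ustar 0)) hz.le
          linarith

/-- under (A2) and (A3) with `α ≥ 2·N·L̄/(1−γ)`, if along a closed-loop
trajectory there is `K` with `W(x_k) > z_k` for all `k ≥ K`, then `z_k = z_K =: z_∞ > 0` for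
all `k ≥ K`, the series `Σ_{k=K+2}^∞ Q(x_k)` converges with sum at most
`J*(x_{K+1}, z_∞)/z_∞`, and `Q(x_k) → 0`. -/
theorem eventually_constant_z_and_summable_Q {n m : ℕ}
    (f : Euc n → Euc m → Euc n) (𝕌 : Set (Euc m)) (𝔾 : Set (Euc n))
    (W : Euc n → ℝ) (L : Euc n → Euc m → ℝ) (γ Lbar α β : ℝ) (N : ℕ)
    (hf0 : f 0 0 = 0) (hUcomp : IsCompact 𝕌) (hU0 : (0 : Euc m) ∈ 𝕌)
    (hG0 : (0 : Euc n) ∈ 𝔾)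
    (hA2 : A2 f 𝕌 𝔾 W γ N) (hA3 : A3 𝕌 𝔾 L Lbar)
    (hα : 0 < α) (hαbig : 2 * N * Lbar / (1 - γ) ≤ α) (hβ : β ∈ Set.Ioo (0 : ℝ) 1)
    (x : ℕ → Euc n) (z : ℕ → ℝ) (hx0 : x 0 ∈ 𝔾) (hz0 : 0 < z 0)
    (hcl : ClosedLoop f 𝕌 𝔾 N L W α β x z)
    (K : ℕ) (hK : ∀ k, K ≤ k → z k < W (x k)) :
    (∀ k, K ≤ k → z k = z K) ∧ 0 < z K ∧
      Summable (fun j => L (x (K + 2 + j)) 0) ∧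
      (∑' j : ℕ, L (x (K + 2 + j)) 0) ≤
        Jstar f 𝕌 𝔾 N L W α (x (K + 1)) (z K) / z K ∧
      Tendsto (fun k => L (x k) 0) atTop (𝓝 0) := by
  obtain ⟨hcl1, hcl2⟩ := hcl
  -- z is positive
  have hzpos : ∀ k, 0 < z k := by
    intro k
    induction k with
    | zero => exact hz0
    | succ k ih =>
        rw [hcl2 k]
        split_ifs
        · exact ih
        · exact mul_pos hβ.1 ih
  -- z is constant after K
  have hzconst : ∀ k, K ≤ k → z k = z K := by
    intro k hk
    induction k, hk using Nat.le_induction with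
    | base => rfl
    | succ k hk ih => rw [hcl2 k, if_pos (hK k hk), ih]
  -- decrease of the optimal value along the closed loop
  have hdec : ∀ k, K ≤ k → Jstar f 𝕌 𝔾 N L W α (x (k + 1)) (z K) ≤
      Jstar f 𝕌 𝔾 N L W α (x k) (z K) - z K * L (x (k + 1)) 0 := by
    intro k hk
    obtain ⟨us, qs, hf, hopt, hmin, hxk1⟩ := hcl1 k
    have hzk : z k = z K := hzconst k hk
    rw [hzk] at hopt hmin
    have hz' : z K < W (x (k + 1)) := by
      have h := hK (k + 1) (by omega)
      rwa [hzconst (k + 1) (by omega)] at h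
    rw [hxk1] at hz' ⊢
    exact key_decrease hU0 hG0 hA2 hA3 hα hαbig (x k) (hzpos K) us qs hf hopt hmin hz'
  -- telescoping bound on partial sums
  have hsum : ∀ M, z K * ∑ j ∈ Finset.range M, L (x (K + 2 + j)) 0 ≤
      Jstar f 𝕌 𝔾 N L W α (x (K + 1)) (z K) -
        Jstar f 𝕌 𝔾 N L W α (x (K + 1 + M)) (z K) := by
    intro M
    induction M with
    | zero => simp
    | succ M ih =>
        have hd := hdec (K + 1 + M) (by omega)
        have he1 : K + 1 + M + 1 = K + 2 + M := by omega
        have he2 : K + 1 + (M + 1) = K + 2 + M := by omega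
        rw [he1] at hd
        rw [Finset.sum_range_succ, mul_add, he2]
        linarith
  have hbound : ∀ M, ∑ j ∈ Finset.range M, L (x (K + 2 + j)) 0 ≤
      Jstar f 𝕌 𝔾 N L W α (x (K + 1)) (z K) / z K := by
    intro M
    rw [le_div_iff₀ (hzpos K)]
    have h1 := hsum M
    have h2 := Jstar_nonneg hA2 hA3 hα (x (K + 1 + M)) (hzpos K)
    have h3 := mul_comm (z K) (∑ j ∈ Finset.range M, L (x (K + 2 + j)) 0)
    linarith
  have hsummable : Summable (fun j => L (x (K + 2 + j)) 0) :=
    summable_of_sum_range_le (fun j => Q_nonneg hA3 _) hbound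
  have htsum : (∑' j : ℕ, L (x (K + 2 + j)) 0) ≤
      Jstar f 𝕌 𝔾 N L W α (x (K + 1)) (z K) / z K :=
    Summable.tsum_le_of_sum_range_le hsummable hbound
  have htend0 : Tendsto (fun j => L (x (K + 2 + j)) 0) atTop (𝓝 0) :=
    hsummable.tendsto_atTop_zero
  have heq : (fun j => L (x (K + 2 + j)) 0) = (fun j => L (x (j + (K + 2))) 0) := by
    funext j
    exact congrArg (fun t => L (x t) 0) (Nat.add_comm (K + 2) j)
  have htend : Tendsto (fun k => L (x k) 0) atTop (𝓝 0) :=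
    (Filter.tendsto_add_atTop_iff_nat (K + 2)).mp (heq ▸ htend0)
  exact ⟨hzconst, hzpos K, hsummable, htsum, htend⟩
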